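/- Let p_1 and p_3 be odd primes with p_1 ≡ 1 (mod 4) and p_3 ≡ 3 (mod 4). Then the number of equivalence classes (under x ↦ x+t) of integer quadratics f = ax^2+bx+c with a(b^2-4ac) = p_1·p_3 and b^2-4ac > 0 equals 5 + (p_1/p_3), where (p_1/p_3) is the Legendre symbol. -/

import Mathlib

/-- The superdiscriminant `I(f) = a*(b^2 - 4*a*c)` of the integer quadratic
polynomial `f(x) = a*x^2 + b*x + c`, encoded as the triple `(a, b, c)`. -/
def superdisc (p : ℤ × ℤ × ℤ) : ℤ := p.1 * (p.2.1 ^ 2 - 4 * p.1 * p.2.2)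

/-- Equivalence of integer quadratics under the substitution `x ↦ x + t`, `t ∈ ℤ`:
`a*(x+t)^2 + b*(x+t) + c = a*x^2 + (b + 2*a*t)*x + (a*t^2 + b*t + c)`. -/
def quadEquiv (p q : ℤ × ℤ × ℤ) : Prop :=
  ∃ t : ℤ, q = (p.1, p.2.1 + 2 * p.1 * t, p.1 * t ^ 2 + p.2.1 * t + p.2.2)

/-- The number of equivalence classes (under `x ↦ x + t`) of integer quadratics
with superdiscriminant `n` satisfying the extra condition `P`. -/
noncomputable def quadCount (n : ℤ) (P : ℤ × ℤ × ℤ → Prop) : ℕ :=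
  Nat.card (Quot (fun p q : {p : ℤ × ℤ × ℤ // superdisc p = n ∧ P p} =>
    quadEquiv p.1 q.1))

/-!
If `a (b² - 4ac) = p₁ p₃` with `D = b² - 4ac > 0`, then `a` is a positive divisor of `p₁ p₃`
and `D = p₁ p₃ / a`. Discriminants are `0` or `1` mod `4`, so `a = 1` (`D ≡ 3`) and `a = p₁`
(`D = p₃ ≡ 3`) contribute no class. For odd `a` and `D ≡ 1 mod 4`, the class of `(a, b, c)` is
determined by `b mod 2a`; as `b` is odd, this is the same as `b mod a`, which runs over all
square roots of `D` modulo `a`. So `a = p₃` contributes `1 + (p₁/p₃)` classes, and `a = p₁ p₃`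
the `2 · 2` square roots of `1` modulo `p₁ p₃`.
-/

def disc (p : ℤ × ℤ × ℤ) : ℤ := discrim p.1 p.2.1 p.2.2

abbrev QuadClass (a D : ℤ) : Type :=
  Quot (fun p q : {p : ℤ × ℤ × ℤ // p.1 = a ∧ disc p = D} => quadEquiv p.1 q.1)

namespace quadEquiv

variable {p q : ℤ × ℤ × ℤ}

theorem equivalence : Equivalence quadEquiv where
  refl p := ⟨0, by simp⟩
  symm := by
    rintro ⟨a, b, c⟩ _ ⟨t, rfl⟩
    exact ⟨-t, by simp only [Prod.mk.injEq]; exact ⟨trivial, by ring, by ring⟩⟩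
  trans := by
    rintro ⟨a, b, c⟩ _ _ ⟨t, rfl⟩ ⟨u, rfl⟩
    exact ⟨t + u, by simp only [Prod.mk.injEq]; exact ⟨trivial, by ring, by ring⟩⟩

theorem fst_eq (h : quadEquiv p q) : q.1 = p.1 := by
  obtain ⟨t, rfl⟩ := h
  rfl

theorem dvd_sub (h : quadEquiv p q) : 2 * p.1 ∣ q.2.1 - p.2.1 := by
  obtain ⟨t, rfl⟩ := h
  exact ⟨t, by ring⟩

theorem of_dvd_sub (ha : p.1 ≠ 0) (h₁ : q.1 = p.1) (hd : disc q = disc p)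
    (hb : 2 * p.1 ∣ q.2.1 - p.2.1) : quadEquiv p q := by
  obtain ⟨a, b, c⟩ := p
  obtain ⟨a', b', c'⟩ := q
  obtain ⟨t, ht⟩ := hb
  dsimp only at ha h₁ ht
  subst h₁
  have hb' : b' = b + 2 * a' * t := by linarith
  have hc' : c' = a' * t ^ 2 + b * t + c := by
    refine mul_left_cancel₀ (mul_ne_zero four_ne_zero ha) ?_
    simp only [disc, discrim, hb'] at hd
    linear_combination -hd
  exact ⟨t, by rw [hb', hc']⟩

theorem of_quot_mk_eq {P : ℤ × ℤ × ℤ → Prop} {p q : Subtype P}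
    (h : Quot.mk (fun p q : Subtype P => quadEquiv p.1 q.1) p = Quot.mk _ q) :
    quadEquiv p.1 q.1 :=
  (equivalence.comap Subtype.val).eqvGen_iff.mp (Quot.eq.mp h)

end quadEquiv

theorem disc_emod_four (p : ℤ × ℤ × ℤ) : disc p % 4 = 0 ∨ disc p % 4 = 1 := by
  have h : disc p = p.2.1 ^ 2 + 4 * (-(p.1 * p.2.2)) := by simp only [disc, discrim]; ring
  rw [h, Int.add_mul_emod_self_left]
  rcases Int.even_or_odd p.2.1 with ⟨k, hk⟩ | hodd
  · left
    rw [hk, show (k + k) ^ 2 = 4 * k ^ 2 by ring, Int.mul_emod_right]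
  · exact Or.inr (Int.sq_mod_four_eq_one_of_odd hodd)

theorem odd_snd_fst_of_odd_disc {p : ℤ × ℤ × ℤ} (h : Odd (disc p)) : Odd p.2.1 := by
  rw [disc, discrim, Int.odd_sub] at h
  exact (Int.odd_pow' two_ne_zero).mp (h.mpr ⟨2 * p.1 * p.2.2, by ring⟩)

theorem intCast_disc_eq_sq {a : ℕ} {p : ℤ × ℤ × ℤ} (h : p.1 = a) :
    ((disc p : ℤ) : ZMod a) = (p.2.1 : ZMod a) ^ 2 := by
  push_cast [disc, discrim, h, ZMod.natCast_self]
  ring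

namespace QuadClass

theorem card_eq_zero {a D : ℤ} (hD : 2 ≤ D % 4) : Nat.card (QuadClass a D) = 0 := by
  have : IsEmpty (QuadClass a D) := ⟨Quot.ind fun ⟨p, _, hp⟩ => by
    rcases disc_emod_four p with h | h <;> omega⟩
  exact Nat.card_of_isEmpty

theorem finite {a : ℕ} (ha : a ≠ 0) (D : ℤ) : Finite (QuadClass a D) := by
  have : NeZero (2 * a) := ⟨by omega⟩
  refine Finite.of_injective
    (Quot.lift (fun p => (p.1.2.1 : ZMod (2 * a))) fun p q h => ?_) ?_
  · rw [ZMod.intCast_eq_intCast_iff_dvd_sub]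
    push_cast
    simpa only [p.2.1] using h.dvd_sub
  · rintro ⟨p, hpa, hpd⟩ ⟨q, hqa, hqd⟩ h
    have h' := (ZMod.intCast_eq_intCast_iff_dvd_sub _ _ _).mp h
    push_cast at h'
    have hpq : quadEquiv p q :=
      quadEquiv.of_dvd_sub (by omega) (by omega) (by omega) (by rwa [hpa])
    exact Quot.sound hpq

variable {a : ℕ} {D : ℤ}

def toSqrt (a : ℕ) (D : ℤ) : QuadClass a D → {x : ZMod a // x ^ 2 = D} :=
  Quot.lift (fun p => ⟨p.1.2.1, by rw [← intCast_disc_eq_sq p.2.1, p.2.2]⟩) fun p q h =>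
    Subtype.ext <| (ZMod.intCast_eq_intCast_iff_dvd_sub _ _ _).mpr <|
      (Dvd.intro_left 2 rfl).trans (by simpa only [p.2.1] using h.dvd_sub)

theorem toSqrt_injective (ha : Odd a) (hD : Odd D) : Function.Injective (toSqrt a D) := by
  rintro ⟨p, hpa, hpd⟩ ⟨q, hqa, hqd⟩ h
  have hdvd_a : (a : ℤ) ∣ q.2.1 - p.2.1 :=
    (ZMod.intCast_eq_intCast_iff_dvd_sub _ _ _).mp (congrArg Subtype.val h)
  have hdvd_two : 2 ∣ q.2.1 - p.2.1 :=
    ((odd_snd_fst_of_odd_disc (hqd ▸ hD)).sub_odd (odd_snd_fst_of_odd_disc (hpd ▸ hD))).two_dvd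
  have hdvd : 2 * p.1 ∣ q.2.1 - p.2.1 :=
    hpa ▸ (Int.isCoprime_two_left.mpr ((Int.odd_coe_nat a).mpr ha)).mul_dvd hdvd_two hdvd_a
  have hpq : quadEquiv p q :=
    quadEquiv.of_dvd_sub (by have := ha.pos; omega) (by omega) (by omega) hdvd
  exact Quot.sound hpq

theorem toSqrt_surjective (ha : Odd a) (hD : D % 4 = 1) : Function.Surjective (toSqrt a D) := by
  have : NeZero a := ⟨ha.pos.ne'⟩
  have ha' : Odd (a : ℤ) := (Int.odd_coe_nat a).mpr ha
  rintro ⟨x, hx⟩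
  set b : ℤ := x.val + a * (x.val + 1)
  have hb_odd : Odd b := by
    rw [show b = (a + 1) * x.val + a by ring]
    exact (ha'.add_one.mul_right _).add_odd ha'
  have hbx : (b : ZMod a) = x := by simp [b]
  have h_four : 4 ∣ b ^ 2 - D :=
    Int.ModEq.dvd (hD.trans (Int.sq_mod_four_eq_one_of_odd hb_odd).symm)
  have h_a : (a : ℤ) ∣ b ^ 2 - D :=
    (ZMod.intCast_zmod_eq_zero_iff_dvd _ _).mp (by push_cast; rw [hbx, hx, sub_self])
  have h_coprime : IsCoprime (4 : ℤ) a := by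
    simpa using (Int.isCoprime_two_left.mpr ha').pow_left (m := 2)
  obtain ⟨c, hc⟩ := h_coprime.mul_dvd h_four h_a
  refine ⟨Quot.mk _ ⟨(a, b, c), rfl, ?_⟩, Subtype.ext hbx⟩
  simp only [disc, discrim]
  linarith

theorem card_eq_card_sqrts (ha : Odd a) (hD : D % 4 = 1) :
    Nat.card (QuadClass a D) = Nat.card {x : ZMod a // x ^ 2 = D} :=
  Nat.card_eq_of_bijective _
    ⟨toSqrt_injective ha (Int.odd_iff.mpr (by omega)), toSqrt_surjective ha hD⟩

end QuadClass

theorem superdisc_eq_and_disc_pos_iff {N : ℤ} (hN : 0 < N) {p : ℤ × ℤ × ℤ} :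
    superdisc p = N ∧ 0 < disc p ↔ ∃ a ∈ N.natAbs.divisors, p.1 = a ∧ disc p = N / a := by
  have hs : superdisc p = p.1 * disc p := rfl
  constructor
  · rintro ⟨hsN, hd⟩
    have ha : 0 < p.1 := pos_of_mul_pos_left (hs ▸ hsN ▸ hN) hd.le
    refine ⟨p.1.natAbs, Nat.mem_divisors.mpr ⟨?_, by omega⟩, by omega, ?_⟩
    · exact Int.natAbs_dvd_natAbs.mpr ⟨_, hsN ▸ hs⟩
    · rw [Int.natAbs_of_nonneg ha.le, ← hsN, hs, Int.mul_ediv_cancel_left _ ha.ne']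
  · rintro ⟨a, ha, hpa, hpd⟩
    have hdvd : (a : ℤ) ∣ N := Int.natCast_dvd.mpr (Nat.dvd_of_mem_divisors ha)
    refine ⟨by rw [hs, hpa, hpd, Int.mul_ediv_cancel' hdvd], ?_⟩
    exact hpd ▸ Int.ediv_pos_of_pos_of_dvd hN (by positivity) hdvd

theorem quadCount_disc_pos_eq_sum {N : ℤ} (hN : 0 < N) :
    quadCount N (fun p => 0 < disc p) =
      ∑ a ∈ N.natAbs.divisors, Nat.card (QuadClass a (N / a)) := by
  have (a : N.natAbs.divisors) : Finite (QuadClass a (N / a)) :=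
    QuadClass.finite (Nat.pos_of_mem_divisors a.2).ne' _
  rw [← Finset.sum_coe_sort, ← Nat.card_sigma]
  refine (Nat.card_eq_of_bijective (fun x => Quot.map
    (fun p : {p // p.1 = _ ∧ disc p = _} =>
      ⟨p.1, (superdisc_eq_and_disc_pos_iff hN).mpr ⟨x.1, x.1.2, p.2⟩⟩)
    (fun _ _ h => h) x.2) ⟨?_, ?_⟩).symm
  · rintro ⟨a, ⟨p, hpa, hpd⟩⟩ ⟨a', ⟨q, hqa, hqd⟩⟩ h
    have hpq : quadEquiv p q := quadEquiv.of_quot_mk_eq h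
    obtain rfl : a = a' := Subtype.ext (by have := hpq.fst_eq; omega)
    exact congrArg (Sigma.mk a) (Quot.sound hpq)
  · rintro ⟨p, hp⟩
    obtain ⟨a, ha, hpa, hpd⟩ := (superdisc_eq_and_disc_pos_iff hN).mp hp
    exact ⟨⟨⟨a, ha⟩, Quot.mk _ ⟨p, hpa, hpd⟩⟩, rfl⟩

theorem Nat.Coprime.sum_divisors_mul_eq {M : Type*} [AddCommMonoid M] {m n : ℕ}
    (hmn : m.Coprime n) (f : ℕ → M) :
    ∑ d ∈ (m * n).divisors, f d = ∑ x ∈ m.divisors, ∑ y ∈ n.divisors, f (x * y) := by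
  rw [hmn.divisors_mul, Finset.sum_map, ← Finset.sum_product']
  exact Finset.sum_attach _ (fun p : ℕ × ℕ => f (p.1 * p.2))

theorem Nat.sum_divisors_mul_primes {M : Type*} [AddCommMonoid M] {p q : ℕ} (hp : p.Prime)
    (hq : q.Prime) (hpq : p ≠ q) (f : ℕ → M) :
    ∑ d ∈ (p * q).divisors, f d = f 1 + f p + f q + f (p * q) := by
  rw [((Nat.coprime_primes hp hq).mpr hpq).sum_divisors_mul_eq, hp.divisors, hq.divisors]
  simp only [Finset.sum_pair hp.one_lt.ne, Finset.sum_pair hq.one_lt.ne, one_mul, mul_one]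
  abel

theorem ZMod.natCard_sqrts_mul {m n : ℕ} (hmn : m.Coprime n) (D : ℤ) :
    Nat.card {x : ZMod (m * n) // x ^ 2 = D} =
      Nat.card {x : ZMod m // x ^ 2 = D} * Nat.card {x : ZMod n // x ^ 2 = D} := by
  rw [← Nat.card_prod]
  refine Nat.card_congr (((ZMod.chineseRemainder hmn).toEquiv.subtypeEquiv fun x => ?_).trans
    Equiv.subtypeProdEquivProd)
  rw [← (ZMod.chineseRemainder hmn).injective.eq_iff, map_pow, map_intCast, Prod.ext_iff]
  rfl

theorem ZMod.natCard_sqrts_prime (p : ℕ) [Fact p.Prime] (hp : p ≠ 2) (D : ℤ) :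
    (Nat.card {x : ZMod p // x ^ 2 = D} : ℤ) = legendreSym p D + 1 := by
  have := legendreSym.card_sqrts p hp D
  rwa [← Nat.card_eq_card_toFinset] at this

theorem ZMod.natCard_sqrts_one_prime (p : ℕ) [Fact p.Prime] (hp : p ≠ 2) :
    Nat.card {x : ZMod p // x ^ 2 = (1 : ℤ)} = 2 := by
  have := ZMod.natCard_sqrts_prime p hp 1
  rw [legendreSym.at_one] at this
  omega

/-- For primes `p₁ ≡ 1 (mod 4)` and `p₃ ≡ 3 (mod 4)`, the number of classes of
integer quadratics with superdiscriminant `p₁·p₃` and positive discriminant is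
`5 + (p₁/p₃)` (Legendre symbol). -/
theorem quad_count_pos_legendre (p₁ p₃ : ℕ) (hp₁ : p₁.Prime) (hp₃ : p₃.Prime)
    (h₁ : p₁ % 4 = 1) (h₃ : p₃ % 4 = 3) :
    (quadCount ((p₁ : ℤ) * (p₃ : ℤ))
        (fun p => 0 < p.2.1 ^ 2 - 4 * p.1 * p.2.2) : ℤ)
    = 5 + @legendreSym p₃ ⟨hp₃⟩ (p₁ : ℤ) := by
  have : Fact p₁.Prime := ⟨hp₁⟩
  have : Fact p₃.Prime := ⟨hp₃⟩
  have hpos₁ : (0 : ℤ) < p₁ := mod_cast hp₁.pos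
  have hpos₃ : (0 : ℤ) < p₃ := mod_cast hp₃.pos
  have hodd₁ : Odd p₁ := hp₁.odd_of_ne_two (by omega)
  have hodd₃ : Odd p₃ := hp₃.odd_of_ne_two (by omega)
  change (quadCount _ (fun p => 0 < disc p) : ℤ) = _
  rw [quadCount_disc_pos_eq_sum (mul_pos hpos₁ hpos₃), ← Nat.cast_mul, Int.natAbs_natCast,
    Nat.sum_divisors_mul_primes hp₁ hp₃ (by omega)]
  have h₁₃ : p₁ * p₃ % 4 = 3 := by rw [Nat.mul_mod, h₁, h₃]
  have card_one : Nat.card (QuadClass (1 : ℕ) (↑(p₁ * p₃) / (1 : ℕ))) = 0 :=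
    QuadClass.card_eq_zero (by rw [Nat.cast_one, Int.ediv_one]; omega)
  have card_p₁ : Nat.card (QuadClass p₁ (↑(p₁ * p₃) / p₁)) = 0 :=
    QuadClass.card_eq_zero (by rw [Nat.cast_mul, Int.mul_ediv_cancel_left _ hpos₁.ne']; omega)
  have card_p₃ : (Nat.card (QuadClass p₃ (↑(p₁ * p₃) / p₃)) : ℤ) = legendreSym p₃ p₁ + 1 := by
    rw [Nat.cast_mul, Int.mul_ediv_cancel _ hpos₃.ne',
      QuadClass.card_eq_card_sqrts hodd₃ (by omega), ZMod.natCard_sqrts_prime p₃ (by omega)]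
  have card_p₁p₃ : Nat.card (QuadClass ↑(p₁ * p₃) (↑(p₁ * p₃) / ↑(p₁ * p₃))) = 4 := by
    rw [Int.ediv_self (by push_cast; exact (mul_pos hpos₁ hpos₃).ne'),
      QuadClass.card_eq_card_sqrts (hodd₁.mul hodd₃) (by norm_num),
      ZMod.natCard_sqrts_mul ((Nat.coprime_primes hp₁ hp₃).mpr (by omega)),
      ZMod.natCard_sqrts_one_prime p₁ (by omega), ZMod.natCard_sqrts_one_prime p₃ (by omega)]
  rw [Nat.cast_add, Nat.cast_add, Nat.cast_add, card_one, card_p₁, card_p₃, card_p₁p₃]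
  push_cast
  ring
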